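/- The formal power series E ∈ ℚ⟦t⟧ whose n-th coefficient is f(0,n) satisfies E = 1 + t²·E². -/

import Mathlib

/-!
A walk of length `n + 1` is a walk of length `n` followed by one step, which gives
`f(0, n + 1) = f(1, n)` and `f(i + 1, n + 1) = f(i, n) + f(i + 2, n)`. The ballot numbers
`C(n, (n + i)/2) - C(n, (n + i)/2 + 1)` satisfy the same recursion, so `f(0, 2m)` is the Catalan
number `C(2m, m) - C(2m, m + 1)` and `f(0, n) = 0` for odd `n`. Hence `E(t) = C(t²)` for the
Catalan series `C`, and `E = 1 + t² E²` is the image of `C = 1 + t C²` under `t ↦ t²`.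
-/

/-- The number of walks of length `n` on the nonnegative integers starting at `0`,
ending at `i`, with steps `+1` or `-1`. -/
noncomputable def walkCount (i n : ℕ) : ℕ :=
  Nat.card {w : Fin (n + 1) → ℕ //
    w 0 = 0 ∧ w (Fin.last n) = i ∧
    ∀ k : Fin n, ((w k.succ : ℤ) - (w k.castSucc : ℤ)).natAbs = 1}

open PowerSeries

def IsWalk (i n : ℕ) (w : Fin (n + 1) → ℕ) : Prop :=
  w 0 = 0 ∧ w (Fin.last n) = i ∧
    ∀ k : Fin n, ((w k.succ : ℤ) - (w k.castSucc : ℤ)).natAbs = 1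

abbrev Walks (i n : ℕ) : Type := {w : Fin (n + 1) → ℕ // IsWalk i n w}

lemma walkCount_eq_card (i n : ℕ) : walkCount i n = Nat.card (Walks i n) := rfl

namespace IsWalk

variable {i a n : ℕ}

lemma apply_le {w : Fin (n + 1) → ℕ} (hw : IsWalk i n w) (k : Fin (n + 1)) : w k ≤ k := by
  induction k using Fin.induction with
  | zero => simp [hw.1]
  | succ k ih =>
    have hstep := hw.2.2 k
    simp only [Fin.val_succ, Fin.val_castSucc] at ih ⊢
    omega

lemma snoc {v : Fin (n + 1) → ℕ} (hv : IsWalk i n v) (ha : ((a : ℤ) - i).natAbs = 1) :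
    IsWalk a (n + 1) (Fin.snoc v a) := by
  obtain ⟨h0, hlast, hstep⟩ := hv
  refine ⟨by rw [← Fin.castSucc_zero, Fin.snoc_castSucc]; exact h0, Fin.snoc_last _ _,
    fun k => ?_⟩
  induction k using Fin.lastCases with
  | last => simpa [hlast] using ha
  | cast j =>
    rw [Fin.succ_castSucc, Fin.snoc_castSucc, Fin.snoc_castSucc]
    exact hstep j

lemma init {w : Fin (n + 2) → ℕ} (hw : IsWalk a (n + 1) w) :
    IsWalk (w (Fin.last n).castSucc) n (Fin.init w) :=
  ⟨hw.1, rfl, fun j => by simpa [Fin.init, ← Fin.succ_castSucc] using hw.2.2 j.castSucc⟩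

lemma natAbs_sub_penultimate {w : Fin (n + 2) → ℕ} (hw : IsWalk a (n + 1) w) :
    ((a : ℤ) - w (Fin.last n).castSucc).natAbs = 1 := by
  have h := hw.2.2 (Fin.last n)
  rwa [Fin.succ_last, hw.2.1] at h

end IsWalk

instance (i n : ℕ) : Finite (Walks i n) :=
  Set.Finite.to_subtype <|
    (Set.Finite.pi (t := fun _ : Fin (n + 1) => Set.Iic n) fun _ => Set.finite_Iic n).subset
      fun _ (hw : IsWalk i n _) k _ => (hw.apply_le k).trans (Nat.lt_succ_iff.mp k.is_lt)

def walksPenultimateEquiv {a b n : ℕ} (hab : ((a : ℤ) - b).natAbs = 1) :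
    {w : Walks a (n + 1) // w.1 (Fin.last n).castSucc = b} ≃ Walks b n where
  toFun w := ⟨Fin.init w.1.1, by simpa only [w.2] using w.1.2.init⟩
  invFun v := ⟨⟨Fin.snoc v.1 a, v.2.snoc hab⟩, by simpa using v.2.2.1⟩
  left_inv w := by
    refine Subtype.ext (Subtype.ext ?_)
    simpa [w.1.2.2.1] using Fin.snoc_init_self w.1.1
  right_inv v := Subtype.ext (Fin.init_snoc (α := fun _ => ℕ) a v.1)

lemma walkCount_zero_right (i : ℕ) : walkCount i 0 = if i = 0 then 1 else 0 := by
  rw [walkCount_eq_card]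
  split_ifs with hi
  · subst hi
    have : Unique (Walks 0 0) :=
      { default := ⟨fun _ => 0, rfl, rfl, Fin.elim0⟩
        uniq := fun w => Subtype.ext (funext fun k => by rw [Fin.fin_one_eq_zero k]; exact w.2.1) }
    exact Nat.card_unique
  · have : IsEmpty (Walks i 0) := ⟨fun w => hi (w.2.2.1.symm.trans w.2.1)⟩
    exact Nat.card_of_isEmpty

lemma walkCount_zero_succ (n : ℕ) : walkCount 0 (n + 1) = walkCount 1 n := by
  have hpen (w : Walks 0 (n + 1)) : w.1 (Fin.last n).castSucc = 1 := by
    have := w.2.natAbs_sub_penultimate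
    omega
  exact Nat.card_congr
    ((Equiv.subtypeUnivEquiv hpen).symm.trans (walksPenultimateEquiv (by norm_num)))

lemma walkCount_succ_succ (i n : ℕ) :
    walkCount (i + 1) (n + 1) = walkCount i n + walkCount (i + 2) n := by
  have hpen (w : Walks (i + 1) (n + 1)) :
      w.1 (Fin.last n).castSucc ≠ i ↔ w.1 (Fin.last n).castSucc = i + 2 := by
    have := w.2.natAbs_sub_penultimate
    omega
  rw [walkCount_eq_card, ← Nat.card_congr (Equiv.sumCompl fun w : Walks (i + 1) (n + 1) =>
    w.1 (Fin.last n).castSucc = i), Nat.card_sum,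
    Nat.card_congr (walksPenultimateEquiv (by omega)),
    Nat.card_congr ((Equiv.subtypeEquivRight hpen).trans (walksPenultimateEquiv (by omega)))]
  rfl

/-- The reflection-principle count of walks of length `n` from `0` to `i` staying nonnegative. -/
def ballot (i n : ℕ) : ℤ :=
  if 2 ∣ n + i then (n.choose ((n + i) / 2) : ℤ) - n.choose ((n + i) / 2 + 1) else 0

lemma ballot_of_eq_two_mul {i n h : ℕ} (hh : n + i = 2 * h) :
    ballot i n = (n.choose h : ℤ) - n.choose (h + 1) := by
  rw [ballot, if_pos ⟨h, hh⟩, show (n + i) / 2 = h by omega]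

lemma ballot_of_not_dvd {i n : ℕ} (h : ¬ 2 ∣ n + i) : ballot i n = 0 := if_neg h

lemma ballot_zero_right (i : ℕ) : ballot i 0 = if i = 0 then 1 else 0 := by
  split_ifs with hi
  · simp [hi, ballot]
  · by_cases heven : 2 ∣ 0 + i
    · obtain ⟨h, hh⟩ := heven
      rw [ballot_of_eq_two_mul hh, Nat.choose_eq_zero_of_lt (by omega),
        Nat.choose_eq_zero_of_lt (by omega), sub_self]
    · exact ballot_of_not_dvd heven

lemma ballot_zero_succ (n : ℕ) : ballot 0 (n + 1) = ballot 1 n := by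
  by_cases heven : 2 ∣ n + 1
  · obtain ⟨m, rfl⟩ : ∃ m, n = 2 * m + 1 := by
      obtain ⟨h, hh⟩ := heven
      exact ⟨h - 1, by omega⟩
    rw [ballot_of_eq_two_mul (h := m + 1) (by omega), ballot_of_eq_two_mul (h := m + 1) (by omega),
      Nat.choose_succ_succ _ m, Nat.choose_succ_succ _ (m + 1), ← Nat.choose_symm_half]
    push_cast
    ring
  · rw [ballot_of_not_dvd (by omega), ballot_of_not_dvd (by omega)]

lemma ballot_succ_succ (i n : ℕ) : ballot (i + 1) (n + 1) = ballot i n + ballot (i + 2) n := by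
  by_cases heven : 2 ∣ n + i
  · obtain ⟨h, hh⟩ := heven
    rw [ballot_of_eq_two_mul (h := h + 1) (by omega), ballot_of_eq_two_mul hh,
      ballot_of_eq_two_mul (h := h + 1) (by omega), Nat.choose_succ_succ _ h,
      Nat.choose_succ_succ _ (h + 1)]
    push_cast
    ring
  · rw [ballot_of_not_dvd (by omega), ballot_of_not_dvd (by omega), ballot_of_not_dvd (by omega),
      add_zero]

lemma walkCount_eq_ballot (i n : ℕ) : (walkCount i n : ℤ) = ballot i n := by
  induction n generalizing i with
  | zero => rw [walkCount_zero_right, ballot_zero_right]; split_ifs <;> rfl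
  | succ n ih =>
    cases i with
    | zero => rw [walkCount_zero_succ, ballot_zero_succ, ih]
    | succ i => rw [walkCount_succ_succ, ballot_succ_succ, Nat.cast_add, ih, ih]

lemma catalan_eq_choose_sub_choose (m : ℕ) :
    (catalan m : ℤ) = (2 * m).choose m - (2 * m).choose (m + 1) := by
  have hchoose : ((2 * m).choose (m + 1) : ℤ) * (m + 1) = (2 * m).choose m * m := by
    have := Nat.choose_succ_right_eq (2 * m) m
    rw [show 2 * m - m = m by omega] at this
    exact_mod_cast this
  have hcatalan : ((m : ℤ) + 1) * catalan m = (2 * m).choose m := by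
    rw [← Nat.centralBinom_eq_two_mul_choose, ← succ_mul_catalan_eq_centralBinom]
    push_cast
    ring
  apply mul_right_cancel₀ (show (m : ℤ) + 1 ≠ 0 by positivity)
  linear_combination hcatalan + hchoose

lemma walkCount_zero_two_mul (m : ℕ) : walkCount 0 (2 * m) = catalan m := by
  have h := walkCount_eq_ballot 0 (2 * m)
  rw [ballot_of_eq_two_mul (add_zero _), ← catalan_eq_choose_sub_choose] at h
  exact_mod_cast h

lemma walkCount_zero_of_not_dvd {n : ℕ} (hn : ¬ 2 ∣ n) : walkCount 0 n = 0 := by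
  have h := walkCount_eq_ballot 0 n
  rw [ballot_of_not_dvd hn] at h
  exact_mod_cast h

lemma mk_walkCount_zero :
    (mk fun n => (walkCount 0 n : ℚ)) =
      expand 2 two_ne_zero (map (Nat.castRingHom ℚ) catalanSeries) := by
  ext n
  rw [coeff_mk, coeff_expand]
  split_ifs with hn
  · obtain ⟨m, rfl⟩ := hn
    simp [walkCount_zero_two_mul]
  · simp [walkCount_zero_of_not_dvd hn]

theorem excursion_series_algebraic :
    (PowerSeries.mk fun n => (walkCount 0 n : ℚ)) =
      1 + PowerSeries.X ^ 2 * (PowerSeries.mk fun n => (walkCount 0 n : ℚ)) ^ 2 := by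
  have h := congrArg (fun φ => expand 2 two_ne_zero (map (Nat.castRingHom ℚ) φ))
    catalanSeries_sq_mul_X_add_one
  simp only [map_add, map_mul, map_pow, map_X, map_one, expand_X] at h
  rw [mk_walkCount_zero]
  conv_lhs => rw [← h]
  ring
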